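/- For all x, y in V, if Ω(x + y) = Ω(x) + Ω(y), then max(‖⟨x, y⟩‖_A, ‖θ_{x,y}‖) = 4 Ω(x) Ω(y), where θ_{x,y} : V → V is the bounded linear operator θ_{x,y}(z) = x⟨y, z⟩ and ‖θ_{x,y}‖ is its operator norm. -/

import Mathlib

/-!
Setting: `A` is a C*-algebra and `V` is a Hilbert C*-module over `A`.
`WithCStarModule (A × V)` is the Hilbert `A`-module `A ⊕ V`, with inner product
`⟪(a, y), (b, z)⟫ = a * b + ⟪y, z⟫` and norm `‖(a, y)‖ = ‖a * a + ⟪y, y⟫‖ ^ (1/2)`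
(both provided by Mathlib).  For `x : V` and `lam : ℂ` with `|lam| = 1`, the operator
`M_{x,lam} : A ⊕ V → A ⊕ V`, `(a, y) ↦ (conj lam • ⟪x, y⟫, lam • (x <• a))` is encoded
by a family `M` of continuous linear maps satisfying the predicate `IsM` below, and the
numerical radius is `numRadius M x = (1/2) * sup_{|lam| = 1} ‖M x lam‖`.
-/

open scoped RightActions InnerProductSpace

noncomputable section

variable {A V : Type*} [NonUnitalCStarAlgebra A] [PartialOrder A] [StarOrderedRing A]
  [NormedAddCommGroup V] [NormedSpace ℂ V] [SMul A V] [CStarModule A V] [CompleteSpace V]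

/-- The element of the Hilbert `A`-module `A ⊕ V` with components `a : A` and `y : V`. -/
def pairElem (a : A) (y : V) : WithCStarModule A (A × V) :=
  (WithCStarModule.equiv A (A × V)).symm (a, y)

/-- `IsM M` asserts that for every `x : V` and every unimodular `lam : ℂ`, the continuous
linear map `M x lam` is the operator `M_{x,lam} : (a, y) ↦ (conj lam • ⟪x, y⟫, lam • (x <• a))`
on `A ⊕ V`. -/
def IsM (M : V → ℂ → (WithCStarModule A (A × V) →L[ℂ] WithCStarModule A (A × V))) : Prop :=
  ∀ (x : V) (lam : ℂ), ‖lam‖ = 1 → ∀ (a : A) (y : V),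
    M x lam (pairElem a y) = pairElem ((starRingEnd ℂ) lam • ⟪x, y⟫_A) (lam • (a • x))

/-- The numerical radius `Ω(x) = (1/2) * sup_{|lam| = 1} ‖M_{x,lam}‖`. -/
def numRadius (M : V → ℂ → (WithCStarModule A (A × V) →L[ℂ] WithCStarModule A (A × V)))
    (x : V) : ℝ :=
  (1 / 2) * sSup ((fun lam : ℂ => ‖M x lam‖) '' {lam : ℂ | ‖lam‖ = 1})

/-- `IsTheta Θ` asserts that for all `x y : V`, the continuous linear map `Θ x y` is the
"compact" operator `θ_{x,y} : V → V`, `z ↦ x <• ⟪y, z⟫`. -/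
def IsTheta (Θ : V → V → (V →L[ℂ] V)) : Prop :=
  ∀ (x y z : V), Θ x y z = ⟪y, z⟫_A • x

/-!
For every unimodular `lam`, `‖M_{x,lam}‖ = ‖x‖`: the bound `≤` is the C⋆-Cauchy–Schwarz
inequality `⟪x, y⟫⟪y, x⟫ ≤ ‖x‖² ⟪y, y⟫` together with `a ⟪x, x⟫ a* ≤ ‖x‖² a a*`, and `≥` comes
from testing on `(0, x)`. Hence `Ω(x) = ‖x‖ / 2`, so additivity of `Ω` is equality in the triangle
inequality; expanding `⟪x + y, x + y⟫` then forces `‖⟪x, y⟫‖ = ‖x‖ ‖y‖`, which dominates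
`‖θ_{x,y}‖`.
-/

section CStarModule

variable {E : Type*} [NormedAddCommGroup E] [NormedSpace ℂ E] [SMul A E] [CStarModule A E]

lemma norm_le_of_inner_self_le {F : Type*} [NormedAddCommGroup F] [NormedSpace ℂ F] [SMul A F]
    [CStarModule A F] {u : E} {v : F} {c : ℝ} (hc : 0 ≤ c) (h : ⟪u, u⟫_A ≤ c ^ 2 • ⟪v, v⟫_A) :
    ‖u‖ ≤ c * ‖v‖ := by
  have hsq : ‖u‖ ^ 2 ≤ (c * ‖v‖) ^ 2 :=
    calc ‖u‖ ^ 2 = ‖⟪u, u⟫_A‖ := CStarModule.norm_sq_eq A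
      _ ≤ ‖c ^ 2 • ⟪v, v⟫_A‖ :=
        CStarAlgebra.norm_le_norm_of_nonneg_of_le CStarModule.inner_self_nonneg h
      _ = (c * ‖v‖) ^ 2 := by
        rw [norm_smul, Real.norm_of_nonneg (by positivity), ← CStarModule.norm_sq_eq A, mul_pow]
  exact (pow_le_pow_iff_left₀ (norm_nonneg _) (by positivity) two_ne_zero).mp hsq

lemma inner_op_smul_self_le (a : A) (x : E) : ⟪a • x, a • x⟫_A ≤ ‖x‖ ^ 2 • (a * star a) := by
  rw [CStarModule.norm_sq_eq A, CStarModule.inner_op_smul_left, CStarModule.inner_op_smul_right]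
  exact CStarAlgebra.star_right_conjugate_le_norm_smul CStarModule.isSelfAdjoint_inner_self

lemma norm_op_smul_le (a : A) (x : E) : ‖a • x‖ ≤ ‖x‖ * ‖a‖ :=
  norm_le_of_inner_self_le (v := a) (norm_nonneg x) (inner_op_smul_self_le a x)

lemma norm_inner_eq_mul_of_norm_add_eq {x y : E} (h : ‖x + y‖ = ‖x‖ + ‖y‖) :
    ‖⟪x, y⟫_A‖ = ‖x‖ * ‖y‖ := by
  refine le_antisymm (CStarModule.norm_inner_le E) ?_
  have hyx : ‖⟪y, x⟫_A‖ = ‖⟪x, y⟫_A‖ := by rw [← CStarModule.star_inner x, norm_star]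
  have hexpand : (‖x‖ + ‖y‖) ^ 2 ≤ ‖x‖ ^ 2 + ‖y‖ ^ 2 + 2 * ‖⟪x, y⟫_A‖ :=
    calc (‖x‖ + ‖y‖) ^ 2 = ‖⟪x, x⟫_A + ⟪y, y⟫_A + (⟪x, y⟫_A + ⟪y, x⟫_A)‖ := by
          rw [← h, CStarModule.norm_sq_eq A]
          simp only [CStarModule.inner_add_left, CStarModule.inner_add_right]
          abel_nf
      _ ≤ ‖⟪x, x⟫_A‖ + ‖⟪y, y⟫_A‖ + (‖⟪x, y⟫_A‖ + ‖⟪y, x⟫_A‖) :=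
          (norm_add_le _ _).trans (add_le_add (norm_add_le _ _) (norm_add_le _ _))
      _ = ‖x‖ ^ 2 + ‖y‖ ^ 2 + 2 * ‖⟪x, y⟫_A‖ := by
          rw [hyx, ← CStarModule.norm_sq_eq A, ← CStarModule.norm_sq_eq A]; ring
  nlinarith

lemma inner_pairElem_self (a : A) (y : E) :
    ⟪pairElem a y, pairElem a y⟫_A = a * star a + ⟪y, y⟫_A := rfl

section IsM

variable {M : E → ℂ → (WithCStarModule A (A × E) →L[ℂ] WithCStarModule A (A × E))}

lemma IsM.inner_apply_self_le (hM : IsM M) (x : E) {lam : ℂ} (hlam : ‖lam‖ = 1)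
    (v : WithCStarModule A (A × E)) : ⟪M x lam v, M x lam v⟫_A ≤ ‖x‖ ^ 2 • ⟪v, v⟫_A := by
  have hconj : (starRingEnd ℂ) lam * lam = 1 := by simp [Complex.conj_mul', hlam]
  rw [show v = pairElem v.1 v.2 from rfl, hM x lam hlam, inner_pairElem_self, inner_pairElem_self,
    CStarModule.inner_smul_left_complex, CStarModule.inner_smul_right_complex]
  calc _ = ⟪x, v.2⟫_A * ⟪v.2, x⟫_A + ⟪v.1 • x, v.1 • x⟫_A := by
        simp only [star_smul, smul_mul_smul_comm, smul_smul, RCLike.star_def, Complex.conj_conj,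
          hconj, one_smul, CStarModule.star_inner]
    _ ≤ ‖x‖ ^ 2 • ⟪v.2, v.2⟫_A + ‖x‖ ^ 2 • (v.1 * star v.1) :=
        add_le_add CStarModule.inner_mul_inner_swap_le (inner_op_smul_self_le _ _)
    _ = _ := by rw [smul_add, add_comm]

lemma IsM.norm_eq (hM : IsM M) (x : E) {lam : ℂ} (hlam : ‖lam‖ = 1) : ‖M x lam‖ = ‖x‖ := by
  refine le_antisymm ((M x lam).opNorm_le_bound (norm_nonneg x) fun v =>
    norm_le_of_inner_self_le (norm_nonneg x) (hM.inner_apply_self_le x hlam v)) ?_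
  have hv : ‖pairElem (0 : A) x‖ ≤ ‖x‖ :=
    (WithCStarModule.prod_norm_le_norm_add _).trans (by simp [pairElem])
  have hMv : ‖x‖ ^ 2 ≤ ‖M x lam (pairElem (0 : A) x)‖ := by
    rw [hM x lam hlam]
    refine le_trans ?_ (le_max_left _ _ |>.trans (WithCStarModule.max_le_prod_norm _))
    simp [pairElem, norm_smul, hlam, CStarModule.norm_sq_eq A]
  rcases (norm_nonneg x).eq_or_lt with hx | hx
  · rw [← hx]
    exact (M x lam).opNorm_nonneg
  · refine le_of_mul_le_mul_right ?_ hx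
    calc ‖x‖ * ‖x‖ = ‖x‖ ^ 2 := (sq ‖x‖).symm
      _ ≤ ‖M x lam (pairElem (0 : A) x)‖ := hMv
      _ ≤ ‖M x lam‖ * ‖pairElem (0 : A) x‖ := (M x lam).le_opNorm _
      _ ≤ ‖M x lam‖ * ‖x‖ := by gcongr

lemma IsM.numRadius_eq (hM : IsM M) (x : E) : numRadius M x = ‖x‖ / 2 := by
  have hcircle : {lam : ℂ | ‖lam‖ = 1}.Nonempty := ⟨1, norm_one⟩
  have himage : (fun lam : ℂ => ‖M x lam‖) '' {lam : ℂ | ‖lam‖ = 1} = {‖x‖} := by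
    rw [← hcircle.image_const]
    exact Set.image_congr fun lam hlam => hM.norm_eq x hlam
  rw [numRadius, himage, csSup_singleton]
  ring

end IsM

lemma IsTheta.norm_le {Θ : E → E → (E →L[ℂ] E)} (hΘ : IsTheta (A := A) Θ) (x y : E) :
    ‖Θ x y‖ ≤ ‖x‖ * ‖y‖ :=
  (Θ x y).opNorm_le_bound (by positivity) fun z =>
    calc ‖Θ x y z‖ = ‖⟪y, z⟫_A • x‖ := by rw [hΘ]
      _ ≤ ‖x‖ * (‖y‖ * ‖z‖) :=
        (norm_op_smul_le _ x).trans (by gcongr; exact CStarModule.norm_inner_le E)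
      _ = ‖x‖ * ‖y‖ * ‖z‖ := by ring

end CStarModule

theorem stmt16 (M : V → ℂ → (WithCStarModule A (A × V) →L[ℂ] WithCStarModule A (A × V))) (hM : IsM M) (Θ : V → V → (V →L[ℂ] V)) (hΘ : IsTheta (A := A) Θ) (x y : V)
    (h : numRadius M (x + y) = numRadius M x + numRadius M y) :
    max ‖⟪x, y⟫_A‖ ‖Θ x y‖ = 4 * numRadius M x * numRadius M y := by
  simp only [hM.numRadius_eq] at h ⊢
  have hinner := norm_inner_eq_mul_of_norm_add_eq (A := A) (by linarith : ‖x + y‖ = ‖x‖ + ‖y‖)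
  rw [max_eq_left ((hΘ.norm_le x y).trans hinner.ge), hinner]
  ring
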